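/- Let n ∈ ℕ and ω > 0, and let p, q be complex polynomials of degree ≤ n with q(ix) ≠ 0 for all x ∈ [-1,1] such that sup_{x∈[-1,1]} |p(ix)/q(ix) − exp(iωx)| = E^c(n,ω) (i.e., p/q is a Chebyshev approximant). Then p/q is not unitary: there exists x ∈ ℝ with q(ix) = 0 or |p(ix)/q(ix)| ≠ 1. -/

import Mathlib

/-!
Suppose `r = p/q` is unitary on `i[-1,1]` and let `E` be its error. If `E = 0`, then `p = q·exp(ω·)`
on `i[-1,1]`, hence everywhere by the identity theorem; comparing the progressions on which
`exp(ω·)` equals `1` and `-1` gives `p = q` and `p = -q`, so `q = 0`. If `E > 0`, shrink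
`r` to `t·r` with `t = 1 - l` slightly below `1`: since `|r| = |exp(iωx)| = 1`,
`|t r - e|² = t |r - e|² + l² ≤ E² - l (E² - l) < E²` for `0 < l < E²`, so the error drops,
contradicting optimality.
-/

open Set

/-- Uniform error of the rational function `p/q` (evaluated on the imaginary
interval `i[-1,1]`) as an approximation to `exp(iωx)`, `x ∈ [-1,1]`. -/
noncomputable def ratErr (ω : ℝ) (p q : Polynomial ℂ) : ℝ :=
  ⨆ x : Set.Icc (-1:ℝ) 1,
    ‖p.eval (Complex.I * ((x : ℝ) : ℂ)) / q.eval (Complex.I * ((x : ℝ) : ℂ)) -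
      Complex.exp (Complex.I * (ω : ℂ) * ((x : ℝ) : ℂ))‖

/-- Error of rational Chebyshev approximation of degree `n` to `exp(iωx)` on `x ∈ [-1,1]`. -/
noncomputable def chebErr (n : ℕ) (ω : ℝ) : ℝ :=
  sInf { E : ℝ | ∃ p q : Polynomial ℂ, p.natDegree ≤ n ∧ q.natDegree ≤ n ∧
    (∀ x : ℝ, x ∈ Set.Icc (-1:ℝ) 1 → q.eval (Complex.I * (x : ℂ)) ≠ 0) ∧
    E = ratErr ω p q }

/-- Error of unitary best approximation of degree `n` to `exp(iωx)` on `x ∈ [-1,1]`. -/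
noncomputable def unitErr (n : ℕ) (ω : ℝ) : ℝ :=
  sInf { E : ℝ | ∃ p q : Polynomial ℂ, p.natDegree ≤ n ∧ q.natDegree ≤ n ∧
    (∀ x : ℝ, q.eval (Complex.I * (x : ℂ)) ≠ 0 ∧
      ‖p.eval (Complex.I * (x : ℂ)) / q.eval (Complex.I * (x : ℂ))‖ = 1) ∧
    E = ratErr ω p q }

open Polynomial Complex Filter Topology

lemma norm_smul_sub_sq_of_norm_eq_one {F : Type*} [NormedAddCommGroup F] [InnerProductSpace ℝ F]
    {r e : F} (hr : ‖r‖ = 1) (he : ‖e‖ = 1) (t : ℝ) :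
    ‖t • r - e‖ ^ 2 = t * ‖r - e‖ ^ 2 + (1 - t) ^ 2 := by
  rw [norm_sub_sq_real, norm_sub_sq_real, norm_smul, inner_smul_left, hr, he, Real.norm_eq_abs,
    mul_one, sq_abs]
  simp only [conj_trivial]
  ring

/-- `p - exp(ca)·q` vanishes on the progression `a + 2πik/c`, on which `exp(c·)` is constant. -/
lemma Polynomial.eq_C_exp_mul_of_forall_eval_eq_mul_exp {p q : ℂ[X]} {c : ℂ} (hc : c ≠ 0)
    (h : ∀ w, p.eval w = q.eval w * exp (c * w)) (a : ℂ) : p = C (exp (c * a)) * q := by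
  apply eq_of_infinite_eval_eq
  have hstep : 2 * Real.pi * I / c ≠ 0 := by simp [hc, Real.pi_ne_zero, I_ne_zero]
  refine infinite_of_injective_forall_mem (f := fun k : ℕ => a + k * (2 * Real.pi * I / c))
    (fun k l hkl => ?_) (fun k => ?_)
  · simpa [hstep] using hkl
  · have hexp : c * (a + k * (2 * Real.pi * I / c)) = c * a + k * (2 * Real.pi * I) := by
      field_simp
    simp only [mem_ofPred_eq, h, eval_mul, eval_C, hexp, exp_add, exp_nat_mul_two_pi_mul_I]
    ring

lemma Polynomial.eq_zero_of_forall_eval_eq_mul_exp {p q : ℂ[X]} {c : ℂ} (hc : c ≠ 0)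
    (h : ∀ w, p.eval w = q.eval w * exp (c * w)) : q = 0 := by
  have hone := eq_C_exp_mul_of_forall_eval_eq_mul_exp hc h 0
  have hminus := eq_C_exp_mul_of_forall_eval_eq_mul_exp hc h (Real.pi * I / c)
  rw [mul_zero, exp_zero, C_1, one_mul] at hone
  rw [mul_div_cancel₀ _ hc, exp_pi_mul_I, C_neg, C_1, neg_one_mul] at hminus
  exact self_eq_neg.mp (hone.symm.trans hminus)

lemma Polynomial.eval_eq_mul_exp_of_eqOn_I_mul_Icc {p q : ℂ[X]} {c : ℂ}
    (h : ∀ x ∈ Icc (-1 : ℝ) 1, p.eval (I * x) = q.eval (I * x) * exp (I * c * x)) :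
    ∀ w, p.eval w = q.eval w * exp (c * w) := by
  set G : ℂ → ℂ := fun w => p.eval w - q.eval w * exp (c * w)
  have hG : Differentiable ℂ G := by fun_prop
  have hI : Tendsto (fun x : ℝ => I * x) (𝓝[≠] 0) (𝓝[≠] 0) := by
    refine tendsto_nhdsWithin_of_tendsto_nhds_of_eventually_within _ ?_ ?_
    · exact ((by fun_prop : Continuous fun x : ℝ => I * x).tendsto' 0 0 (by simp)).mono_left
        nhdsWithin_le_nhds
    · filter_upwards [self_mem_nhdsWithin] with x hx
      simpa [I_ne_zero] using hx
  have hfreq : ∃ᶠ z in 𝓝[≠] (0 : ℂ), G z = 0 := by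
    refine hI.frequently (Eventually.frequently ?_)
    filter_upwards [nhdsWithin_le_nhds (Icc_mem_nhds (by norm_num : (-1 : ℝ) < 0) one_pos)]
      with x hx
    simp only [G, h x hx]
    ring_nf
  intro w
  have := (show AnalyticOnNhd ℂ G univ from fun z _ => hG.analyticAt z).eqOn_zero_of_preconnected_of_frequently_eq_zero isPreconnected_univ (mem_univ 0) hfreq
    (mem_univ w)
  exact sub_eq_zero.mp this

section ratErr

variable {ω : ℝ} {p q : ℂ[X]}

lemma ratErr_nonneg (ω : ℝ) (p q : ℂ[X]) : 0 ≤ ratErr ω p q :=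
  Real.iSup_nonneg fun _ => norm_nonneg _

lemma norm_sub_le_ratErr (hq0 : ∀ x : ℝ, x ∈ Icc (-1 : ℝ) 1 → q.eval (I * x) ≠ 0)
    {x : ℝ} (hx : x ∈ Icc (-1 : ℝ) 1) :
    ‖p.eval (I * x) / q.eval (I * x) - exp (I * ω * x)‖ ≤ ratErr ω p q := by
  have hcont : Continuous fun x : Icc (-1 : ℝ) 1 =>
      ‖p.eval (I * (x : ℝ)) / q.eval (I * (x : ℝ)) - exp (I * ω * (x : ℝ))‖ := by
    fun_prop (disch := exact fun x => hq0 x x.2)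
  exact le_ciSup (isCompact_range hcont).bddAbove ⟨x, hx⟩

lemma chebErr_le_ratErr {n : ℕ} (hp : p.natDegree ≤ n) (hq : q.natDegree ≤ n)
    (hq0 : ∀ x : ℝ, x ∈ Icc (-1 : ℝ) 1 → q.eval (I * x) ≠ 0) : chebErr n ω ≤ ratErr ω p q :=
  csInf_le ⟨0, by rintro _ ⟨p, q, -, -, -, rfl⟩; exact ratErr_nonneg ω p q⟩ ⟨p, q, hp, hq, hq0, rfl⟩

lemma ratErr_pos (hω : ω ≠ 0) (hq0 : ∀ x : ℝ, x ∈ Icc (-1 : ℝ) 1 → q.eval (I * x) ≠ 0) :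
    0 < ratErr ω p q := by
  refine (ratErr_nonneg ω p q).lt_of_ne' fun hE => ?_
  have hexact : ∀ x ∈ Icc (-1 : ℝ) 1, p.eval (I * x) = q.eval (I * x) * exp (I * ω * x) := by
    intro x hx
    have := norm_sub_le_ratErr (ω := ω) (p := p) hq0 hx
    rw [hE, norm_le_zero_iff, sub_eq_zero, div_eq_iff (hq0 x hx)] at this
    rw [this, mul_comm]
  have hq : q = 0 := eq_zero_of_forall_eval_eq_mul_exp (ofReal_ne_zero.mpr hω)
    (eval_eq_mul_exp_of_eqOn_I_mul_Icc hexact)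
  exact hq0 0 (by norm_num) (by simp [hq])

lemma exists_ratErr_C_mul_lt (hq0 : ∀ x : ℝ, x ∈ Icc (-1 : ℝ) 1 → q.eval (I * x) ≠ 0)
    (hunit : ∀ x : ℝ, x ∈ Icc (-1 : ℝ) 1 → ‖p.eval (I * x) / q.eval (I * x)‖ = 1)
    (hE : 0 < ratErr ω p q) : ∃ t : ℝ, ratErr ω (C (t : ℂ) * p) q < ratErr ω p q := by
  set E := ratErr ω p q
  set l := min (E ^ 2 / 2) 1
  have hl0 : 0 < l := lt_min (by positivity) one_pos
  have hl1 : l ≤ 1 := min_le_right _ _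
  have hlE : l < E ^ 2 := (min_le_left _ _).trans_lt (by linarith [pow_pos hE 2])
  have : Nonempty (Icc (-1 : ℝ) 1) := ⟨⟨0, by norm_num⟩⟩
  refine ⟨1 - l, lt_of_le_of_lt (b := √(E ^ 2 - l * (E ^ 2 - l))) (ciSup_le fun x => ?_) ?_⟩
  · have hexp : ‖exp (I * ω * (x : ℝ))‖ = 1 := by
      rw [show I * ω * (x : ℝ) = ((ω * x : ℝ) : ℂ) * I by push_cast; ring]
      exact norm_exp_ofReal_mul_I _
    have hsq := norm_smul_sub_sq_of_norm_eq_one (hunit x x.2) hexp (1 - l)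
    have hle := norm_sub_le_ratErr (ω := ω) (p := p) hq0 x.2
    rw [eval_mul, eval_C, mul_div_assoc, ← real_smul, Real.le_sqrt (norm_nonneg _) (by nlinarith),
      hsq]
    nlinarith [pow_le_pow_left₀ (norm_nonneg _) hle 2]
  · rw [Real.sqrt_lt' hE]
    nlinarith

end ratErr

/-- for `ω > 0`, Chebyshev approximants are not unitary. -/
theorem cheb_approximant_not_unitary (n : ℕ) (ω : ℝ) (hω : 0 < ω) (p q : Polynomial ℂ)
    (hp : p.natDegree ≤ n) (hq : q.natDegree ≤ n)
    (hq0 : ∀ x : ℝ, x ∈ Set.Icc (-1:ℝ) 1 → q.eval (Complex.I * (x : ℂ)) ≠ 0)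
    (hbest : ratErr ω p q = chebErr n ω) :
    ∃ x : ℝ, q.eval (Complex.I * (x : ℂ)) = 0 ∨
      ‖p.eval (Complex.I * (x : ℂ)) / q.eval (Complex.I * (x : ℂ))‖ ≠ 1 := by
  by_contra! hunitary
  obtain ⟨t, ht⟩ := exists_ratErr_C_mul_lt hq0 (fun x _ => (hunitary x).2)
    (ratErr_pos hω.ne' hq0)
  have := chebErr_le_ratErr (ω := ω) ((natDegree_C_mul_le (t : ℂ) p).trans hp) hq hq0
  linarith
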